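/- For every real N > 0 and all real X, r, the series Σ_{n=0}^∞ (N^{n/2}/(2N)_n) · H_n^N(X√N) · r^n/n! converges and equals exp(rX) · j_{N-1/2}(r). -/

import Mathlib

open Finset Polynomial

/-- The relativistic Hermite polynomial `H_n^N(X)` (real parameter `N > 0`). -/
noncomputable def RH (n : ℕ) (N X : ℝ) : ℝ :=
  ((ascPochhammer ℝ n).eval (2 * N) / (2 * Real.sqrt N) ^ n) *
    ∑ k ∈ Finset.range (n / 2 + 1),
      (-1) ^ k / (ascPochhammer ℝ k).eval (N + 1 / 2) *
        ((n.factorial : ℝ) / (((n - 2 * k).factorial : ℝ) * (k.factorial : ℝ))) *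
        (2 * X / Real.sqrt N) ^ (n - 2 * k)

/-- The normalized Bessel function `j_ν(u) = Σ_k ((-1)^k/(k! (ν+1)_k)) (u/2)^(2k)`. -/
noncomputable def besselj (ν u : ℝ) : ℝ :=
  ∑' k : ℕ, (-1) ^ k / ((k.factorial : ℝ) * (ascPochhammer ℝ k).eval (ν + 1)) * (u / 2) ^ (2 * k)

/-!
Expanding `H_n^N(X√N)`, the `n`-th term of the series is `∑_{2k+m=n} b_k c_m`, where
`b_k = (-1)^k (r/2)^(2k) / (k! (N+1/2)_k)` is the `k`-th term of the series of `j_{N-1/2}(r)` and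
`c_m = (rX)^m / m!` that of `exp(rX)`. The series is therefore the Cauchy product of the
exponential series with the Bessel series placed on the even indices, and both converge absolutely
because `(N+1/2)_k ≥ (N+1/2)^k`.
-/

theorem pow_le_ascPochhammer_eval {S : Type*} [Semiring S] [PartialOrder S] [IsOrderedRing S]
    (n : ℕ) {s : S} (hs : 0 ≤ s) : s ^ n ≤ (ascPochhammer S n).eval s := by
  induction n with
  | zero => simp
  | succ n ih =>
    rw [pow_succ, ascPochhammer_succ_eval]
    exact mul_le_mul ih (le_add_of_nonneg_right n.cast_nonneg) hs
      ((pow_nonneg hs n).trans ih)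

noncomputable def besselTerm (ν u : ℝ) (k : ℕ) : ℝ :=
  (-1) ^ k / ((k.factorial : ℝ) * (ascPochhammer ℝ k).eval (ν + 1)) * (u / 2) ^ (2 * k)

theorem norm_besselTerm_le {ν : ℝ} (hν : -1 < ν) (u : ℝ) (k : ℕ) :
    ‖besselTerm ν u k‖ ≤ ((u / 2) ^ 2 / (ν + 1)) ^ k / k.factorial := by
  have hν1 : 0 < ν + 1 := by linarith
  have hpos : 0 < (ascPochhammer ℝ k).eval (ν + 1) := ascPochhammer_pos k _ hν1
  calc ‖besselTerm ν u k‖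
      = ((u / 2) ^ 2) ^ k / (k.factorial * (ascPochhammer ℝ k).eval (ν + 1)) := by
        rw [besselTerm, Real.norm_eq_abs, abs_mul, abs_div, abs_pow, abs_neg, abs_one, one_pow,
          abs_of_pos (by positivity), pow_mul, abs_of_nonneg (by positivity)]
        ring
    _ ≤ ((u / 2) ^ 2) ^ k / (k.factorial * (ν + 1) ^ k) := by
        gcongr
        exact pow_le_ascPochhammer_eval k hν1.le
    _ = ((u / 2) ^ 2 / (ν + 1)) ^ k / k.factorial := by
        rw [div_pow]; ring

theorem summable_norm_besselTerm {ν : ℝ} (hν : -1 < ν) (u : ℝ) :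
    Summable fun k => ‖besselTerm ν u k‖ :=
  (Real.summable_pow_div_factorial _).of_nonneg_of_le (fun _ => norm_nonneg _)
    (norm_besselTerm_le hν u)

theorem hasSum_besselTerm {ν : ℝ} (hν : -1 < ν) (u : ℝ) :
    HasSum (besselTerm ν u) (besselj ν u) :=
  (summable_norm_besselTerm hν u).of_norm.hasSum

section ExtendTwoMul

open Function

variable {R : Type*}

theorem two_mul_injective : Injective (2 * · : ℕ → ℕ) := fun _ _ h => by simpa using h

theorem summable_norm_extend_two_mul [SeminormedAddCommGroup R] {f : ℕ → R}
    (hf : Summable fun k => ‖f k‖) : Summable fun i => ‖extend (2 * ·) f 0 i‖ := by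
  have h := (summable_extend_zero two_mul_injective).2 hf
  simp only [apply_extend norm, comp_def, Pi.zero_apply, norm_zero]
  exact h

theorem sum_range_extend_two_mul_mul [NonUnitalNonAssocSemiring R] (f g : ℕ → R) (n : ℕ) :
    ∑ i ∈ range (n + 1), extend (2 * ·) f 0 i * g (n - i) =
      ∑ k ∈ range (n / 2 + 1), f k * g (n - 2 * k) := by
  have hsub : (range (n / 2 + 1)).image (2 * ·) ⊆ range (n + 1) := by
    intro i; simp only [mem_image, mem_range]; omega
  rw [← sum_subset hsub, sum_image fun _ _ _ _ h => two_mul_injective h]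
  · simp only [two_mul_injective.extend_apply]
  · intro i hin hi
    rw [extend_apply' _ _ _ ?_, Pi.zero_apply, zero_mul]
    rintro ⟨k, rfl⟩
    simp only [mem_image, mem_range, not_exists, not_and] at hin hi
    exact hi k (by omega) rfl

theorem hasSum_sum_range_mul_sub_two_mul_of_summable_norm [NormedRing R] [CompleteSpace R]
    {f g : ℕ → R} {a b : R} (hf : Summable fun k => ‖f k‖) (hg : Summable fun k => ‖g k‖)
    (hfa : HasSum f a) (hgb : HasSum g b) :
    HasSum (fun n => ∑ k ∈ range (n / 2 + 1), f k * g (n - 2 * k)) (a * b) := by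
  have hf' := summable_norm_extend_two_mul hf
  have h := hasSum_sum_range_mul_of_summable_norm hf' hg
  rw [((hasSum_extend_zero two_mul_injective).2 hfa).tsum_eq, hgb.tsum_eq] at h
  simpa only [sum_range_extend_two_mul_mul] using h

end ExtendTwoMul

theorem RH_term_eq_besselTerm_mul (N X r : ℝ) (k m : ℕ) :
    (-1) ^ k / (ascPochhammer ℝ k).eval (N + 1 / 2) *
        (((2 * k + m).factorial : ℝ) / ((m.factorial : ℝ) * k.factorial)) * (2 * X) ^ m *
        (r ^ (2 * k + m) / (2 ^ (2 * k + m) * (2 * k + m).factorial)) =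
      besselTerm (N - 1 / 2) r k * ((r * X) ^ m / m.factorial) := by
  rw [besselTerm, show N - 1 / 2 + 1 = N + 1 / 2 by ring, div_pow]
  field_simp
  ring

theorem RH_generating_term {N : ℝ} (hN : 0 < N) (X r : ℝ) (n : ℕ) :
    N ^ ((n : ℝ) / 2) / (ascPochhammer ℝ n).eval (2 * N) * RH n N (X * Real.sqrt N) *
        r ^ n / n.factorial =
      ∑ k ∈ range (n / 2 + 1),
        besselTerm (N - 1 / 2) r k * ((r * X) ^ (n - 2 * k) / (n - 2 * k).factorial) := by
  have hsqrt : Real.sqrt N ≠ 0 := (Real.sqrt_pos.2 hN).ne'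
  have hpow : N ^ ((n : ℝ) / 2) = Real.sqrt N ^ n := by
    rw [Real.sqrt_eq_rpow, ← Real.rpow_mul_natCast hN.le]
    ring_nf
  have hP : (ascPochhammer ℝ n).eval (2 * N) ≠ 0 := (ascPochhammer_pos n _ (by positivity)).ne'
  calc _ = ∑ k ∈ range (n / 2 + 1), (-1) ^ k / (ascPochhammer ℝ k).eval (N + 1 / 2) *
        ((n.factorial : ℝ) / ((n - 2 * k).factorial * k.factorial)) * (2 * X) ^ (n - 2 * k) *
        (r ^ n / (2 ^ n * n.factorial)) := by
        have hprefactor : ∀ S : ℝ, Real.sqrt N ^ n / (ascPochhammer ℝ n).eval (2 * N) *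
            ((ascPochhammer ℝ n).eval (2 * N) / (2 * Real.sqrt N) ^ n * S) * r ^ n /
              n.factorial = S * (r ^ n / (2 ^ n * n.factorial)) := by
          intro S
          rw [mul_pow]
          field_simp
        rw [RH, hpow, hprefactor, sum_mul,
          show 2 * (X * Real.sqrt N) / Real.sqrt N = 2 * X by field_simp]
    _ = _ := by
      refine sum_congr rfl fun k hk => ?_
      obtain ⟨m, rfl⟩ : ∃ m, n = 2 * k + m := ⟨n - 2 * k, by grind⟩
      rw [Nat.add_sub_cancel_left]
      exact RH_term_eq_besselTerm_mul N X r k m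

/-- Generating function:
`Σ_n (N^(n/2)/(2N)_n) H_n^N(X√N) r^n/n! = exp(rX) j_(N-1/2)(r)`. -/
theorem RH_bessel_generating_function (N : ℝ) (hN : 0 < N) (X r : ℝ) :
    HasSum (fun n : ℕ =>
        N ^ ((n : ℝ) / 2) / (ascPochhammer ℝ n).eval (2 * N) * RH n N (X * Real.sqrt N) *
          r ^ n / (n.factorial : ℝ))
      (Real.exp (r * X) * besselj (N - 1 / 2) r) := by
  have hν : -1 < N - 1 / 2 := by linarith
  have hexp : HasSum (fun m : ℕ => (r * X) ^ m / m.factorial) (Real.exp (r * X)) := by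
    rw [Real.exp_eq_exp_ℝ]
    exact NormedSpace.expSeries_div_hasSum_exp (r * X)
  have hproduct := hasSum_sum_range_mul_sub_two_mul_of_summable_norm
    (summable_norm_besselTerm hν r) (NormedSpace.norm_expSeries_div_summable (r * X))
    (hasSum_besselTerm hν r) hexp
  rw [mul_comm (besselj _ _)] at hproduct
  exact hproduct.congr_fun (RH_generating_term hN X r)
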